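/- arXiv:1406.1451 — 2 statements merged into one kernel-verified Lean document; each statement's English description precedes it below -/
import Mathlib

section
/- Let a, b, c, d ∈ ℝ with a d − b c ≠ 0, let F(t, s) = (c t + d)s − (a t + b) ∈ ℝ[t, s], and let G ∈ ℝ[t, s] be a nonzero bivariate polynomial written as G(t, s) = Σ_{k=0}^{n} G_k(t) s^k with n the degree of G in s. Then F divides G in ℝ[t, s] if and only if the univariate polynomial Σ_{k=0}^{n} G_k(t) (a t + b)^k (c t + d)^{n−k} is identically zero. -/
/-!
`F = q s - p` with `p = a t + b`, `q = c t + d` is primitive in `ℝ[t][s]`, since `ad - bc ≠ 0`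
makes `p` and `q` coprime. By Gauss's lemma `F ∣ G` can therefore be tested over the fraction
field `ℝ(t)`, where `F = q (s - p/q)` and the test becomes `G(p/q) = 0`; clearing denominators
by `q ^ n` turns `G(p/q)` into the homogenized sum.
-/

open Polynomial Finset

namespace Polynomial

theorem isPrimitive_C_mul_X_sub_C {R : Type*} [CommRing R] {p q : R} (hpq : IsCoprime p q) :
    (C q * X - C p).IsPrimitive := by
  intro r hr
  rw [C_dvd_iff_dvd_coeff] at hr
  exact hpq.isUnit_of_dvd' (by simpa using hr 0) (by simpa using hr 1)

theorem isCoprime_C_mul_X_add_C {k : Type*} [Field k] {a b c d : k}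
    (h : a * d - b * c ≠ 0) : IsCoprime (C a * X + C b) (C c * X + C d) := by
  refine ⟨C (-c / (a * d - b * c)), C (a / (a * d - b * c)), ?_⟩
  have hX : -c / (a * d - b * c) * a + a / (a * d - b * c) * c = 0 := by ring
  have h1 : -c / (a * d - b * c) * b + a / (a * d - b * c) * d = 1 := by
    rw [div_mul_eq_mul_div, div_mul_eq_mul_div, ← add_div, div_eq_one_iff_eq h]; ring
  calc C (-c / (a * d - b * c)) * (C a * X + C b) + C (a / (a * d - b * c)) * (C c * X + C d)
      = C (-c / (a * d - b * c) * a + a / (a * d - b * c) * c) * X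
          + C (-c / (a * d - b * c) * b + a / (a * d - b * c) * d) := by
        simp only [C_mul, C_add]; ring
    _ = 1 := by rw [hX, h1, C_0, C_1, zero_mul, zero_add]

theorem C_mul_X_sub_C_dvd_iff_isRoot {K : Type*} [Field K] {p q : K} (hq : q ≠ 0) (G : K[X]) :
    C q * X - C p ∣ G ↔ G.IsRoot (p / q) := by
  have hF : C q * X - C p = C q * (X - C (p / q)) := by
    rw [mul_sub, ← C_mul, mul_div_cancel₀ p hq]
  rw [hF, (isUnit_C.mpr hq.isUnit).mul_left_dvd, dvd_iff_isRoot]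

theorem eval_div_mul_pow_eq_sum {K : Type*} [Field K] {p q : K} (hq : q ≠ 0) {G : K[X]} {n : ℕ}
    (hn : G.natDegree ≤ n) :
    G.eval (p / q) * q ^ n = ∑ k ∈ range (n + 1), G.coeff k * p ^ k * q ^ (n - k) := by
  rw [eval_eq_sum_range' (Nat.lt_succ_of_le hn), sum_mul]
  refine sum_congr rfl fun k hk => ?_
  rw [div_pow, pow_sub₀ q hq (Nat.lt_succ_iff.mp (mem_range.mp hk))]
  field_simp

theorem C_mul_X_sub_C_dvd_iff_sum_eq_zero {R : Type*} [CommRing R] [IsDomain R]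
    [NormalizedGCDMonoid R] {p q : R} (hpq : IsCoprime p q) (hq : q ≠ 0) (G : R[X]) :
    C q * X - C p ∣ G ↔
      ∑ k ∈ range (G.natDegree + 1), G.coeff k * p ^ k * q ^ (G.natDegree - k) = 0 := by
  have hφ : Function.Injective (algebraMap R (FractionRing R)) :=
    IsFractionRing.injective R (FractionRing R)
  have hφq : algebraMap R (FractionRing R) q ≠ 0 := (map_ne_zero_iff _ hφ).mpr hq
  rw [(isPrimitive_C_mul_X_sub_C hpq).dvd_iff_fraction_map_dvd_fraction_map (FractionRing R),
    Polynomial.map_sub, Polynomial.map_mul, map_C, map_C, Polynomial.map_X,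
    C_mul_X_sub_C_dvd_iff_isRoot hφq, IsRoot.def,
    ← mul_eq_zero_iff_right (pow_ne_zero G.natDegree hφq),
    eval_div_mul_pow_eq_sum hφq natDegree_map_le, ← map_eq_zero_iff _ hφ]
  simp only [coeff_map, map_sum, map_mul, map_pow]

end Polynomial

theorem moebiusLike_dvd_iff_sum_eq_zero_general (a b c d : ℝ) (h : a * d - b * c ≠ 0)
    (G : Polynomial (Polynomial ℝ)) :
    (Polynomial.C (C c * X + C d) * X - Polynomial.C (C a * X + C b) : Polynomial (Polynomial ℝ)) ∣ G ↔
      ∑ k ∈ Finset.range (G.natDegree + 1),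
        G.coeff k * (C a * X + C b) ^ k * (C c * X + C d) ^ (G.natDegree - k) = 0 := by
  have hq : C c * X + C d ≠ 0 := by
    intro hq
    have hc : c = 0 := by simpa using congrArg (coeff · 1) hq
    have hd : d = 0 := by simpa using congrArg (coeff · 0) hq
    exact h (by simp [hc, hd])
  exact C_mul_X_sub_C_dvd_iff_sum_eq_zero (isCoprime_C_mul_X_add_C h) hq G

/-- Let `a, b, c, d ∈ ℝ` with `a d − b c ≠ 0`, and let `F(t, s) = (c t + d)s − (a t + b)`.
A nonzero bivariate polynomial `G(t, s) = Σ_{k=0}^{n} G_k(t) s^k` (here an element of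
`ℝ[t][s]`, with `n` the degree of `G` in `s` and `G_k = G.coeff k ∈ ℝ[t]`) is divisible by
`F` if and only if the univariate polynomial
`Σ_{k=0}^{n} G_k(t) (a t + b)^k (c t + d)^{n−k}` is identically zero. -/
theorem moebiusLike_dvd_iff_sum_eq_zero (a b c d : ℝ) (h : a * d - b * c ≠ 0)
    (G : Polynomial (Polynomial ℝ)) (hG : G ≠ 0) :
    (Polynomial.C (C c * X + C d) * X - Polynomial.C (C a * X + C b) : Polynomial (Polynomial ℝ)) ∣ G ↔
      ∑ k ∈ Finset.range (G.natDegree + 1),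
        G.coeff k * (C a * X + C b) ^ k * (C c * X + C d) ^ (G.natDegree - k) = 0 :=
  moebiusLike_dvd_iff_sum_eq_zero_general a b c d h G
end

section
/- Let x : ℝ → ℝ³ be twice differentiable, let Q ∈ ℝ^{3×3} be an orthogonal matrix, let v ∈ ℝ³, let a, b̃, c ∈ ℝ with Δ := a − b̃c ≠ 0, and let φ(t) = (a t + b̃)/(c t + 1). Suppose Q x(u) + v = x(φ(u)) for all u in some neighborhood of 0, and that x is twice differentiable at b̃ = φ(0). Then Q x'(0) = Δ · x'(b̃), Q x''(0) = Δ² · x''(b̃) − 2cΔ · x'(b̃), and Q (x'(0) × x''(0)) = det(Q) · Δ³ · (x'(b̃) × x''(b̃)). -/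
open Matrix Filter Topology

/-!
Differentiating `Q x(u) + v = x(φ(u))` by the chain rule gives `Q x'(u) = φ'(u) x'(φ(u))` near `0`,
and differentiating once more at `0` gives `Q x''(0) = φ'(0)² x''(b̃) + φ''(0) x'(b̃)`; for the
Möbius map `φ'(u) = Δ / (c u + 1)²`, so `φ'(0) = Δ` and `φ''(0) = -2cΔ`. The cross product
relation then follows from `(Q u) × (Q w) = det Q · Q⁻ᵀ (u × w)` and `x'(b̃) × x'(b̃) = 0`.
-/

theorem Matrix.transpose_mulVec_cross_mulVec {R : Type*} [CommRing R]
    (Q : Matrix (Fin 3) (Fin 3) R) (u w : Fin 3 → R) :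
    Qᵀ *ᵥ ((Q *ᵥ u) ⨯₃ (Q *ᵥ w)) = Q.det • (u ⨯₃ w) := by
  ext i
  fin_cases i <;>
    simp [mulVec, dotProduct, cross_apply, Fin.sum_univ_three, det_fin_three] <;> ring

theorem Matrix.mulVec_cross_of_transpose_mul_self {R : Type*} [CommRing R]
    {Q : Matrix (Fin 3) (Fin 3) R} (hQ : Qᵀ * Q = 1) (u w : Fin 3 → R) :
    Q *ᵥ (u ⨯₃ w) = Q.det • ((Q *ᵥ u) ⨯₃ (Q *ᵥ w)) := by
  have hdet : Q.det * Q.det = 1 := by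
    simpa [det_transpose, det_mul] using congrArg det hQ
  calc Q *ᵥ (u ⨯₃ w) = Q.det • Q *ᵥ (Qᵀ *ᵥ ((Q *ᵥ u) ⨯₃ (Q *ᵥ w))) := by
        rw [transpose_mulVec_cross_mulVec, mulVec_smul, smul_smul, hdet, one_smul]
    _ = Q.det • ((Q *ᵥ u) ⨯₃ (Q *ᵥ w)) := by
        rw [mulVec_mulVec, mul_eq_one_comm.mp hQ, one_mulVec]

theorem hasDerivAt_mobius (a b c d u : ℝ) (hu : c * u + d ≠ 0) :
    HasDerivAt (fun u => (a * u + b) / (c * u + d)) ((a * d - b * c) / (c * u + d) ^ 2) u := by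
  have hnum : HasDerivAt (fun u => a * u + b) a u := by
    simpa using ((hasDerivAt_id u).const_mul a).add_const b
  have hden : HasDerivAt (fun u => c * u + d) c u := by
    simpa using ((hasDerivAt_id u).const_mul c).add_const d
  exact (hnum.fun_div hden hu).congr_deriv (by ring)

theorem hasDerivAt_const_div_sq_affine (k c d u : ℝ) (hu : c * u + d ≠ 0) :
    HasDerivAt (fun u => k / (c * u + d) ^ 2) (-(2 * c * k) / (c * u + d) ^ 3) u := by
  have hden : HasDerivAt (fun u => (c * u + d) ^ 2) (2 * (c * u + d) * c) u := by
    simpa using (((hasDerivAt_id u).const_mul c).add_const d).fun_pow 2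
  exact ((hasDerivAt_const u k).fun_div hden (pow_ne_zero 2 hu)).congr_deriv
    (by field_simp; ring)

theorem HasDerivAt.const_mulVec {m n : Type*} [Fintype m] [Fintype n]
    (Q : Matrix m n ℝ) {f : ℝ → n → ℝ} {f' : n → ℝ} {t : ℝ} (hf : HasDerivAt f f' t) :
    HasDerivAt (fun u => Q *ᵥ f u) (Q *ᵥ f') t :=
  Q.mulVecLin.toContinuousLinearMap.hasFDerivAt.comp_hasDerivAt t hf

section Reparametrization

variable {n : Type*} [Fintype n] {x : ℝ → n → ℝ}
  {Q : Matrix n n ℝ} {v : n → ℝ} {φ φ' : ℝ → ℝ} {t : ℝ}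

theorem eventually_mulVec_deriv_eq (hx : ∀ u, DifferentiableAt ℝ x u)
    (hφ : ∀ᶠ u in 𝓝 t, HasDerivAt φ (φ' u) u)
    (heq : ∀ᶠ u in 𝓝 t, Q *ᵥ x u + v = x (φ u)) :
    ∀ᶠ u in 𝓝 t, Q *ᵥ deriv x u = φ' u • deriv x (φ u) := by
  filter_upwards [heq.eventually_nhds, hφ] with u hu hφu
  have hcomp := ((hx (φ u)).hasDerivAt.scomp u hφu).congr_of_eventuallyEq hu
  exact (((hx u).hasDerivAt.const_mulVec Q).add_const v).unique hcomp

theorem mulVec_deriv_deriv_eq (hx : ∀ u, DifferentiableAt ℝ x u)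
    (hx' : ∀ u, DifferentiableAt ℝ (deriv x) u) {φ'' : ℝ}
    (hφ : ∀ᶠ u in 𝓝 t, HasDerivAt φ (φ' u) u) (hφ' : HasDerivAt φ' φ'' t)
    (heq : ∀ᶠ u in 𝓝 t, Q *ᵥ x u + v = x (φ u)) :
    Q *ᵥ deriv (deriv x) t =
      φ' t ^ 2 • deriv (deriv x) (φ t) + φ'' • deriv x (φ t) := by
  have hrhs := hφ'.smul ((hx' (φ t)).hasDerivAt.scomp t hφ.self_of_nhds)
  have hlhs := (hx' t).hasDerivAt.const_mulVec Q
  rw [hlhs.unique (hrhs.congr_of_eventuallyEq (eventually_mulVec_deriv_eq hx hφ heq)),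
    smul_smul, sq, Function.comp_apply]

end Reparametrization

theorem symmetry_derivative_relations_general (x : ℝ → Fin 3 → ℝ)
    (hx1 : ∀ u : ℝ, DifferentiableAt ℝ x u)
    (hx2 : ∀ u : ℝ, DifferentiableAt ℝ (deriv x) u)
    (Q : Matrix (Fin 3) (Fin 3) ℝ) (hQ : Qᵀ * Q = 1) (v : Fin 3 → ℝ)
    (a bt c : ℝ)
    (heq : ∀ᶠ u in 𝓝 (0 : ℝ), Q *ᵥ x u + v = x ((a * u + bt) / (c * u + 1))) :
    Q *ᵥ deriv x 0 = (a - bt * c) • deriv x bt ∧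
    Q *ᵥ deriv (deriv x) 0 =
      (a - bt * c) ^ 2 • deriv (deriv x) bt - (2 * c * (a - bt * c)) • deriv x bt ∧
    Q *ᵥ ((deriv x 0) ⨯₃ (deriv (deriv x) 0)) =
      (Q.det * (a - bt * c) ^ 3) • ((deriv x bt) ⨯₃ (deriv (deriv x) bt)) := by
  have hden : ∀ᶠ u in 𝓝 (0 : ℝ), c * u + 1 ≠ 0 :=
    ((continuous_const.mul continuous_id).add continuous_const).continuousAt.eventually_ne
      (by simp)
  have hφ : ∀ᶠ u in 𝓝 (0 : ℝ), HasDerivAt (fun u => (a * u + bt) / (c * u + 1))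
      ((a - bt * c) / (c * u + 1) ^ 2) u :=
    hden.mono fun u hu => by simpa using hasDerivAt_mobius a bt c 1 u hu
  have hφ' : HasDerivAt (fun u => (a - bt * c) / (c * u + 1) ^ 2)
      (-(2 * c * (a - bt * c))) 0 := by
    simpa using hasDerivAt_const_div_sq_affine (a - bt * c) c 1 0 (by simp)
  have h1 : Q *ᵥ deriv x 0 = (a - bt * c) • deriv x bt := by
    simpa using (eventually_mulVec_deriv_eq hx1 hφ heq).self_of_nhds
  have h2 : Q *ᵥ deriv (deriv x) 0 =
      (a - bt * c) ^ 2 • deriv (deriv x) bt - (2 * c * (a - bt * c)) • deriv x bt := by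
    simpa [neg_smul, ← sub_eq_add_neg] using mulVec_deriv_deriv_eq hx1 hx2 hφ hφ' heq
  refine ⟨h1, h2, ?_⟩
  rw [Matrix.mulVec_cross_of_transpose_mul_self hQ, h1, h2]
  simp only [map_smul, map_sub, LinearMap.smul_apply, cross_self,
    smul_zero, sub_zero, smul_smul, ← pow_succ]

/-- Let `x : ℝ → ℝ³` be twice differentiable, let `Q` be an orthogonal matrix, `v ∈ ℝ³`,
and let `φ(t) = (a t + b̃)/(c t + 1)` be a Möbius transformation with `Δ := a − b̃c ≠ 0`.
If `Q x(u) + v = x(φ(u))` for all `u` in a neighborhood of `0`, and `x` is twice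
differentiable at `b̃ = φ(0)`, then `Q x'(0) = Δ · x'(b̃)`,
`Q x''(0) = Δ² · x''(b̃) − 2cΔ · x'(b̃)`, and
`Q (x'(0) × x''(0)) = det(Q) · Δ³ · (x'(b̃) × x''(b̃))`. -/
theorem symmetry_derivative_relations (x : ℝ → Fin 3 → ℝ)
    (hx1 : ∀ u : ℝ, DifferentiableAt ℝ x u)
    (hx2 : ∀ u : ℝ, DifferentiableAt ℝ (deriv x) u)
    (Q : Matrix (Fin 3) (Fin 3) ℝ) (hQ : Qᵀ * Q = 1) (v : Fin 3 → ℝ)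
    (a bt c : ℝ) (hΔ : a - bt * c ≠ 0)
    (heq : ∀ᶠ u in 𝓝 (0 : ℝ), Q *ᵥ x u + v = x ((a * u + bt) / (c * u + 1)))
    (hxb1 : DifferentiableAt ℝ x bt) (hxb2 : DifferentiableAt ℝ (deriv x) bt) :
    Q *ᵥ deriv x 0 = (a - bt * c) • deriv x bt ∧
    Q *ᵥ deriv (deriv x) 0 =
      (a - bt * c) ^ 2 • deriv (deriv x) bt - (2 * c * (a - bt * c)) • deriv x bt ∧
    Q *ᵥ ((deriv x 0) ⨯₃ (deriv (deriv x) 0)) =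
      (Q.det * (a - bt * c) ^ 3) • ((deriv x bt) ⨯₃ (deriv (deriv x) bt)) :=
  symmetry_derivative_relations_general x hx1 hx2 Q hQ v a bt c heq
end
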